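/- arXiv:2111.05881 — 5 statements merged into one kernel-verified Lean document; each statement's English description precedes it below -/
import Mathlib

section
/- Let n ≥ 1 and let φ ∈ ℂ^{2ⁿ} be a unit vector. Then (1/(4ⁿ − 1)) · ∑_{s ≠ 0} |φᴴ P_s φ|² = 1/(2ⁿ + 1), where the sum ranges over all n-qubit Pauli strings P_s with s : {1,…,n} → {0,1,2,3} not identically 0. (Since each P_s is Hermitian, φᴴ P_s φ is real.) -/
open Matrix Finset

/-- The four single-qubit Pauli matrices `I, X, Y, Z`. -/
noncomputable def pauli : Fin 4 → Matrix (Fin 2) (Fin 2) ℂ :=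
  ![1, !![0, 1; 1, 0], !![0, -Complex.I; Complex.I, 0], !![1, 0; 0, -1]]

/-- The `n`-qubit Pauli string `σ_{s 1} ⊗ ⋯ ⊗ σ_{s n}`, as a matrix indexed by
functions `Fin n → Fin 2`. -/
noncomputable def pauliString (n : ℕ) (s : Fin n → Fin 4) :
    Matrix (Fin n → Fin 2) (Fin n → Fin 2) ℂ :=
  Matrix.of fun i j => ∏ t, pauli (s t) (i t) (j t)

lemma pauli_conj (a : Fin 4) (i j : Fin 2) : (starRingEnd ℂ) (pauli a i j) = pauli a j i := by
  fin_cases a <;> fin_cases i <;> fin_cases j <;> simp [pauli, Matrix.one_apply]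

lemma pauli_sum (i j k l : Fin 2) :
    ∑ a : Fin 4, pauli a i j * pauli a l k
      = 2 * (if i = k then 1 else 0) * (if j = l then 1 else 0) := by
  fin_cases i <;> fin_cases j <;> fin_cases k <;> fin_cases l <;>
    simp [pauli, Fin.sum_univ_four, Matrix.one_apply] <;> norm_num

lemma pauliString_conj (n : ℕ) (s : Fin n → Fin 4) (i j : Fin n → Fin 2) :
    (starRingEnd ℂ) (pauliString n s i j) = pauliString n s j i := by
  simp [pauliString, map_prod, pauli_conj]

lemma key (n : ℕ) (i j l k : Fin n → Fin 2) :
    ∑ s : Fin n → Fin 4, pauliString n s i j * pauliString n s l k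
      = 2 ^ n * (if i = k then 1 else 0) * (if j = l then 1 else 0) := by
  have h1 : ∀ s : Fin n → Fin 4, pauliString n s i j * pauliString n s l k
      = ∏ t, (pauli (s t) (i t) (j t) * pauli (s t) (l t) (k t)) := by
    intro s; simp [pauliString, Finset.prod_mul_distrib]
  simp_rw [h1]
  have h2 := Finset.prod_univ_sum (fun _ : Fin n => (univ : Finset (Fin 4)))
    (fun t a => pauli a (i t) (j t) * pauli a (l t) (k t))
  rw [Fintype.piFinset_univ] at h2
  rw [← h2]
  simp_rw [pauli_sum]
  rw [Finset.prod_mul_distrib, Finset.prod_mul_distrib, Finset.prod_const,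
    Finset.prod_boole, Finset.prod_boole]
  simp [funext_iff]

/-- For every `n ≥ 1` and every unit vector `φ ∈ ℂ^{2ⁿ}`,
`(1/(4ⁿ − 1)) ∑_{s ≠ 0} |φᴴ P_s φ|² = 1/(2ⁿ + 1)`. -/
theorem average_squared_pauli_expectation (n : ℕ) (hn : 1 ≤ n)
    (φ : (Fin n → Fin 2) → ℂ) (hφ : ∑ i, Complex.normSq (φ i) = 1) :
    (1 / (4 ^ n - 1) : ℝ) *
        ∑ s ∈ Finset.univ.filter (fun s : Fin n → Fin 4 => s ≠ 0),
          Complex.normSq (∑ i, ∑ j, (starRingEnd ℂ) (φ i) * pauliString n s i j * φ j)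
      = 1 / (2 ^ n + 1) := by
  set E : (Fin n → Fin 4) → ℂ :=
    fun s => ∑ i, ∑ j, (starRingEnd ℂ) (φ i) * pauliString n s i j * φ j with hEdef
  have hφC : ∑ i, (starRingEnd ℂ) (φ i) * φ i = 1 := by
    have : ∀ i, (starRingEnd ℂ) (φ i) * φ i = (Complex.normSq (φ i) : ℂ) := by
      intro i; rw [Complex.normSq_eq_conj_mul_self]
    simp_rw [this]
    rw [← Complex.ofReal_sum]
    exact_mod_cast congrArg (Complex.ofReal) hφ
  have hconj : ∀ s, (starRingEnd ℂ) (E s)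
      = ∑ k, ∑ l, φ k * pauliString n s l k * (starRingEnd ℂ) (φ l) := by
    intro s
    simp [hEdef, map_sum, pauliString_conj, mul_comm, mul_assoc, mul_left_comm]
  -- total sum over all s
  have hall : ∑ s : Fin n → Fin 4, (Complex.normSq (E s) : ℂ) = 2 ^ n := by
    have hmc : ∀ s, (Complex.normSq (E s) : ℂ) = E s * (starRingEnd ℂ) (E s) := by
      intro s; rw [Complex.mul_conj]
    simp_rw [hmc, hconj]
    calc ∑ s : Fin n → Fin 4, (∑ i, ∑ j, (starRingEnd ℂ) (φ i) * pauliString n s i j * φ j) *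
            (∑ k, ∑ l, φ k * pauliString n s l k * (starRingEnd ℂ) (φ l))
        = ∑ s : Fin n → Fin 4, ∑ i, ∑ j, ∑ k, ∑ l,
            ((starRingEnd ℂ) (φ i) * φ j * φ k * (starRingEnd ℂ) (φ l)) *
              (pauliString n s i j * pauliString n s l k) := by
          simp_rw [Finset.sum_mul, Finset.mul_sum]
          refine Finset.sum_congr rfl fun s _ => Finset.sum_congr rfl fun i _ =>
            Finset.sum_congr rfl fun j _ => Finset.sum_congr rfl fun k _ =>
            Finset.sum_congr rfl fun l _ => by ring
      _ = ∑ i, ∑ j, ∑ k, ∑ l,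
            ((starRingEnd ℂ) (φ i) * φ j * φ k * (starRingEnd ℂ) (φ l)) *
              ∑ s : Fin n → Fin 4, (pauliString n s i j * pauliString n s l k) := by
          rw [Finset.sum_comm]
          refine Finset.sum_congr rfl fun i _ => ?_
          rw [Finset.sum_comm]
          refine Finset.sum_congr rfl fun j _ => ?_
          rw [Finset.sum_comm]
          refine Finset.sum_congr rfl fun k _ => ?_
          rw [Finset.sum_comm]
          refine Finset.sum_congr rfl fun l _ => ?_
          rw [Finset.mul_sum]
      _ = ∑ i, ∑ j, ∑ k, ∑ l,
            ((starRingEnd ℂ) (φ i) * φ j * φ k * (starRingEnd ℂ) (φ l)) *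
              (2 ^ n * (if i = k then 1 else 0) * (if j = l then 1 else 0)) := by
          simp_rw [key]
      _ = ∑ i, ∑ j, ((starRingEnd ℂ) (φ i) * φ i) * ((starRingEnd ℂ) (φ j) * φ j) * 2 ^ n := by
          refine Finset.sum_congr rfl fun i _ => Finset.sum_congr rfl fun j _ => ?_
          rw [Finset.sum_eq_single i]
          · rw [Finset.sum_eq_single j]
            · simp; ring
            · intro l _ hl; simp [Ne.symm hl]
            · simp
          · intro k _ hk; simp [Ne.symm hk]
          · simp
      _ = 2 ^ n := by
          simp_rw [← Finset.sum_mul, ← Finset.mul_sum, hφC]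
          simp [hφC]
  have hallR : ∑ s : Fin n → Fin 4, Complex.normSq (E s) = 2 ^ n := by
    have : ((∑ s : Fin n → Fin 4, Complex.normSq (E s) : ℝ) : ℂ) = ((2 ^ n : ℝ) : ℂ) := by
      push_cast
      simpa using hall
    exact_mod_cast this
  have hE0 : Complex.normSq (E 0) = 1 := by
    have hp0 : ∀ i j : Fin n → Fin 2, pauliString n 0 i j = if i = j then 1 else 0 := by
      intro i j
      have : ∀ t : Fin n, pauli ((0 : Fin n → Fin 4) t) (i t) (j t)
          = if i t = j t then 1 else 0 := by
        intro t
        show pauli 0 (i t) (j t) = _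
        simp [pauli, Matrix.one_apply]
      simp only [pauliString, Matrix.of_apply, this, Finset.prod_boole]
      simp [funext_iff]
    have : E 0 = 1 := by
      simp only [hEdef, hp0, mul_ite, ite_mul, mul_one, mul_zero, zero_mul, one_mul]
      simp [Finset.sum_ite_eq, hφC]
    rw [this]; simp
  have hfil : ∑ s ∈ Finset.univ.filter (fun s : Fin n → Fin 4 => s ≠ 0),
      Complex.normSq (E s) = 2 ^ n - 1 := by
    have herase : ∑ x ∈ Finset.univ.erase (0 : Fin n → Fin 4), Complex.normSq (E x)
        + Complex.normSq (E 0) = ∑ s : Fin n → Fin 4, Complex.normSq (E s) :=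
      Finset.sum_erase_add Finset.univ _ (Finset.mem_univ _)
    rw [Finset.filter_ne']
    rw [hallR, hE0] at herase
    linarith
  rw [hfil]
  have h2 : (1 : ℝ) < 2 ^ n := by
    calc (1:ℝ) < 2 ^ 1 := by norm_num
    _ ≤ 2 ^ n := by exact pow_le_pow_right₀ (by norm_num) hn
  have h4 : (4 : ℝ) ^ n - 1 = (2 ^ n - 1) * (2 ^ n + 1) := by
    have : (4 : ℝ) ^ n = (2 ^ n) * (2 ^ n) := by
      rw [← mul_pow]; norm_num
    rw [this]; ring
  rw [h4]
  have hne1 : (2 : ℝ) ^ n - 1 ≠ 0 := by linarith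
  have hne2 : (2 : ℝ) ^ n + 1 ≠ 0 := by positivity
  field_simp
end

section
/- Let d, T ≥ 1, let M ≥ 2 be even, let 0 < ε ≤ 0.29, and let δ ≥ 0. Let O₁, …, O_M be d×d Hermitian complex matrices with operator norm ‖O_x‖ ≤ 1 for all x and with O_{x+M/2} = −O_x for 1 ≤ x ≤ M/2. Let ψ₁, …, ψ_T ∈ ℂ^d be unit vectors such that for every t, (2/M)·∑_{x=1}^{M/2} (ψ_tᴴ O_x ψ_t)² ≤ δ. Then (1/M)·∑_{x=1}^{M} ∏_{t=1}^{T} (1 + 3ε·ψ_tᴴ O_x ψ_t) ≥ exp(−9Tε²δ) ≥ 1 − 9Tε²δ. (Since O_x is Hermitian, ψ_tᴴ O_x ψ_t is real.) -/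
/-!
Write `a x t = 3ε ψ_tᴴ O_x ψ_t`, so that `|a x t| ≤ 3ε ≤ 0.87`. Pairing `x` with `x + M/2` turns
the sum into `∑_{x < M/2} (∏_t (1 + a x t) + ∏_t (1 - a x t))`. By AM–GM each pair is at least
`2 √(∏_t (1 - a x t ²))`, and `1 - u ≥ exp (-2u)` for `0 ≤ u ≤ 0.87²` makes this at least
`2 exp (-∑_t a x t ²)`. Jensen's inequality for `exp` over `x` and the mean-square hypothesis
then bound the average below by `exp (-9Tε²δ)`.
-/

open Matrix Finset

/-- The `L²`-operator norm (largest singular value) of a complex matrix. -/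
noncomputable def opNorm {n : Type*} [Fintype n] [DecidableEq n] (A : Matrix n n ℂ) : ℝ :=
  ‖Matrix.toEuclideanCLM (𝕜 := ℂ) A‖

/-- The (real part of the) quadratic form `ψᴴ A ψ`; for Hermitian `A` this is the
real number `ψᴴ A ψ`. -/
noncomputable def qform {ι : Type*} [Fintype ι] (A : Matrix ι ι ℂ) (ψ : ι → ℂ) : ℝ :=
  (∑ i, ∑ j, (starRingEnd ℂ) (ψ i) * A i j * ψ j).re

lemma qform_neg {ι : Type*} [Fintype ι] (A : Matrix ι ι ℂ) (ψ : ι → ℂ) :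
    qform (-A) ψ = -qform A ψ := by
  simp [qform]

lemma qform_eq_reApplyInnerSelf {n : Type*} [Fintype n] [DecidableEq n] (A : Matrix n n ℂ)
    (ψ : n → ℂ) :
    qform A ψ = (toEuclideanCLM (𝕜 := ℂ) A).reApplyInnerSelf (WithLp.toLp 2 ψ) := by
  rw [ContinuousLinearMap.reApplyInnerSelf_apply, inner_re_symm, toEuclideanCLM_toLp,
    EuclideanSpace.inner_toLp_toLp, qform]
  simp only [dotProduct, mulVec, sum_mul, Pi.star_apply, RCLike.star_def]
  congr 1
  exact sum_congr rfl fun i _ => sum_congr rfl fun j _ => by ring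

lemma abs_qform_le_opNorm {n : Type*} [Fintype n] [DecidableEq n] (A : Matrix n n ℂ)
    {ψ : n → ℂ} (hψ : ∑ i, Complex.normSq (ψ i) = 1) : |qform A ψ| ≤ opNorm A := by
  have hunit : ‖WithLp.toLp 2 ψ‖ = 1 := by
    simp [EuclideanSpace.norm_eq, Complex.sq_norm, hψ]
  simpa [ContinuousLinearMap.rayleighQuotient, hunit, qform_eq_reApplyInnerSelf, opNorm] using
    (toEuclideanCLM (𝕜 := ℂ) A).rayleighQuotient_le_norm (WithLp.toLp 2 ψ)

lemma abs_mul_qform_le {n : Type*} [Fintype n] [DecidableEq n] {c : ℝ} (hc : 0 ≤ c)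
    {A : Matrix n n ℂ} (hA : opNorm A ≤ 1) {ψ : n → ℂ} (hψ : ∑ i, Complex.normSq (ψ i) = 1) :
    |c * qform A ψ| ≤ c := by
  rw [abs_mul, abs_of_nonneg hc]
  exact mul_le_of_le_one_right hc ((abs_qform_le_opNorm A hψ).trans hA)

lemma exp_neg_two_mul_le_one_sub {u : ℝ} (h0 : 0 ≤ u) (h1 : u ≤ 0.7569) :
    Real.exp (-(2 * u)) ≤ 1 - u := by
  have htaylor : 1 + 2 * u + 2 * u ^ 2 + 4 / 3 * u ^ 3 ≤ Real.exp (2 * u) := by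
    have h := Real.sum_le_exp_of_nonneg (by linarith : (0 : ℝ) ≤ 2 * u) 4
    norm_num [sum_range_succ, Nat.factorial] at h
    linarith
  have hcubic : 1 ≤ (1 - u) * (1 + 2 * u + 2 * u ^ 2 + 4 / 3 * u ^ 3) := by
    nlinarith [mul_le_mul_of_nonneg_left h1 h0, pow_le_pow_left₀ h0 h1 3]
  rw [Real.exp_neg, inv_le_iff_one_le_mul₀ (Real.exp_pos _)]
  nlinarith

lemma exp_sum_div_card_le {ι : Type*} (s : Finset ι) (hs : s.Nonempty) (f : ι → ℝ) :
    Real.exp ((∑ i ∈ s, f i) / #s) ≤ (∑ i ∈ s, Real.exp (f i)) / #s := by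
  have hcard : (0 : ℝ) < #s := by exact_mod_cast hs.card_pos
  have hw : ∑ _i ∈ s, (#s : ℝ)⁻¹ = 1 := by simp [hcard.ne']
  simpa [← mul_sum, div_eq_inv_mul] using
    convexOn_exp.map_sum_le (fun _ _ => inv_nonneg.2 hcard.le) hw fun i _ => Set.mem_univ (f i)

lemma two_mul_exp_neg_sum_sq_le {ι : Type*} (s : Finset ι) (a : ι → ℝ)
    (ha : ∀ i ∈ s, |a i| ≤ 0.87) :
    2 * Real.exp (-∑ i ∈ s, a i ^ 2) ≤ ∏ i ∈ s, (1 + a i) + ∏ i ∈ s, (1 - a i) := by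
  have hfactor_nonneg : ∀ i ∈ s, 0 ≤ 1 + a i ∧ 0 ≤ 1 - a i := fun i hi => by
    have := abs_le.1 (ha i hi)
    constructor <;> linarith
  have hsq : Real.exp (-∑ i ∈ s, a i ^ 2) ^ 2 ≤ (∏ i ∈ s, (1 + a i)) * ∏ i ∈ s, (1 - a i) := by
    calc Real.exp (-∑ i ∈ s, a i ^ 2) ^ 2 = ∏ i ∈ s, Real.exp (-(2 * a i ^ 2)) := by
          rw [← Real.exp_sum, ← Real.exp_nat_mul, sum_neg_distrib, ← mul_sum]
          congr 1
          push_cast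
          ring
      _ ≤ ∏ i ∈ s, ((1 + a i) * (1 - a i)) := by
          refine prod_le_prod (fun _ _ => (Real.exp_pos _).le) fun i hi => ?_
          have hsq_le : a i ^ 2 ≤ 0.7569 := by
            have := sq_le_sq' (abs_le.1 (ha i hi)).1 (abs_le.1 (ha i hi)).2
            norm_num at this ⊢
            linarith
          linarith [exp_neg_two_mul_le_one_sub (sq_nonneg (a i)) hsq_le]
      _ = (∏ i ∈ s, (1 + a i)) * ∏ i ∈ s, (1 - a i) := prod_mul_distrib
  have hP := prod_nonneg fun i hi => (hfactor_nonneg i hi).1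
  have hQ := prod_nonneg fun i hi => (hfactor_nonneg i hi).2
  -- AM–GM: `2E ≤ P + Q` whenever `E² ≤ P Q` with `P, Q ≥ 0`.
  nlinarith [sq_nonneg (∏ i ∈ s, (1 + a i) - ∏ i ∈ s, (1 - a i)), Real.exp_pos (-∑ i ∈ s, a i ^ 2)]

lemma sum_range_add_self {β : Type*} [AddCommMonoid β] (f : ℕ → β) (K : ℕ) :
    ∑ x ∈ range (K + K), f x = ∑ x ∈ range K, (f x + f (x + K)) := by
  rw [sum_range_add, ← sum_add_distrib]
  simp only [add_comm K]

theorem exp_neg_card_mul_le_sum_prod_div {ι τ : Type*} (s : Finset ι) (hs : s.Nonempty)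
    (u : Finset τ) (a : ι → τ → ℝ) (ha : ∀ x ∈ s, ∀ t ∈ u, |a x t| ≤ 0.87) (δ : ℝ)
    (hδ : ∀ t ∈ u, (∑ x ∈ s, a x t ^ 2) / #s ≤ δ) :
    Real.exp (-(#u * δ)) ≤
      (∑ x ∈ s, (∏ t ∈ u, (1 + a x t) + ∏ t ∈ u, (1 - a x t))) / (2 * #s) := by
  have hmean : (∑ x ∈ s, ∑ t ∈ u, a x t ^ 2) / #s ≤ #u * δ := by
    rw [sum_comm, sum_div]
    simpa using sum_le_sum hδ
  calc Real.exp (-(#u * δ))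
      ≤ Real.exp ((∑ x ∈ s, -∑ t ∈ u, a x t ^ 2) / #s) := by
        rw [sum_neg_distrib, neg_div, Real.exp_le_exp]
        exact neg_le_neg hmean
    _ ≤ (∑ x ∈ s, Real.exp (-∑ t ∈ u, a x t ^ 2)) / #s := exp_sum_div_card_le s hs _
    _ ≤ (∑ x ∈ s, (∏ t ∈ u, (1 + a x t) + ∏ t ∈ u, (1 - a x t)) / 2) / #s := by
        gcongr with x hx
        linarith [two_mul_exp_neg_sum_sq_le u (a x) (ha x hx)]
    _ = (∑ x ∈ s, (∏ t ∈ u, (1 + a x t) + ∏ t ∈ u, (1 - a x t))) / (2 * #s) := by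
        rw [← sum_div, div_div]

/-- Observables are indexed by `0, …, M−1` (so “`O_{x+M/2} = −O_x` for `1 ≤ x ≤ M/2`” reads
`O (x + M/2) = −O x` for `x < M/2`), and the `T` measurement vectors by `0, …, T−1`. -/
theorem shadow_tomography_likelihood_ratio_bound_general
    (d T M : ℕ) (hM : 2 ≤ M) (hMeven : Even M)
    (ε δ : ℝ) (hε0 : 0 < ε) (hε : ε ≤ 0.29)
    (O : ℕ → Matrix (Fin d) (Fin d) ℂ)
    (hnorm : ∀ x < M, opNorm (O x) ≤ 1)
    (hneg : ∀ x < M / 2, O (x + M / 2) = -O x)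
    (ψ : ℕ → Fin d → ℂ)
    (hψ : ∀ t < T, ∑ i, Complex.normSq (ψ t i) = 1)
    (hδbound : ∀ t < T,
      (2 / M : ℝ) * ∑ x ∈ Finset.range (M / 2), (qform (O x) (ψ t)) ^ 2 ≤ δ) :
    Real.exp (-9 * T * ε ^ 2 * δ) ≤
        (1 / M : ℝ) * ∑ x ∈ Finset.range M, ∏ t ∈ Finset.range T, (1 + 3 * ε * qform (O x) (ψ t))
      ∧ 1 - 9 * T * ε ^ 2 * δ ≤ Real.exp (-9 * T * ε ^ 2 * δ) := by
  refine ⟨?_, by linarith [Real.add_one_le_exp (-9 * T * ε ^ 2 * δ)]⟩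
  set K := M / 2
  have hMK : M = K + K := by obtain ⟨m, rfl⟩ := hMeven; omega
  set a : ℕ → ℕ → ℝ := fun x t => 3 * ε * qform (O x) (ψ t) with ha_def
  have ha : ∀ x ∈ range K, ∀ t ∈ range T, |a x t| ≤ 0.87 := fun x hx t ht =>
    (abs_mul_qform_le (by positivity) (hnorm x (by rw [mem_range] at hx; omega))
      (hψ t (mem_range.1 ht))).trans (by linarith)
  have hmean : ∀ t ∈ range T, (∑ x ∈ range K, a x t ^ 2) / #(range K) ≤ 9 * ε ^ 2 * δ :=
    fun t ht => by
      have hqt := hδbound t (mem_range.1 ht)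
      rw [hMK, Nat.cast_add, ← two_mul, div_mul_cancel_left₀ two_ne_zero] at hqt
      calc (∑ x ∈ range K, a x t ^ 2) / #(range K)
          = 9 * ε ^ 2 * ((K : ℝ)⁻¹ * ∑ x ∈ range K, qform (O x) (ψ t) ^ 2) := by
            simp only [ha_def, card_range, mul_pow, ← mul_sum]
            ring
        _ ≤ 9 * ε ^ 2 * δ := by gcongr
  have hpairs : ∑ x ∈ range M, ∏ t ∈ range T, (1 + a x t) =
      ∑ x ∈ range K, (∏ t ∈ range T, (1 + a x t) + ∏ t ∈ range T, (1 - a x t)) := by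
    rw [hMK, sum_range_add_self]
    refine sum_congr rfl fun x hx => ?_
    simp only [ha_def, hneg x (mem_range.1 hx), qform_neg, mul_neg, ← sub_eq_add_neg]
  calc Real.exp (-9 * T * ε ^ 2 * δ) = Real.exp (-(#(range T) * (9 * ε ^ 2 * δ))) := by
        rw [card_range]; ring_nf
    _ ≤ (∑ x ∈ range K, (∏ t ∈ range T, (1 + a x t) + ∏ t ∈ range T, (1 - a x t)))
          / (2 * #(range K)) :=
        exp_neg_card_mul_le_sum_prod_div _ (nonempty_range_iff.2 (by omega)) _ a ha _ hmean
    _ = (1 / M : ℝ) * ∑ x ∈ range M, ∏ t ∈ range T, (1 + a x t) := by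
        rw [hpairs, card_range, hMK]
        push_cast
        ring

/-- The core likelihood-ratio bound for the general shadow tomography
lower bound. Observables are indexed by `0, …, M−1` (so “`O_{x+M/2} = −O_x` for
`1 ≤ x ≤ M/2`” reads `O (x + M/2) = −O x` for `x < M/2`), and the `T` measurement
vectors are indexed by `0, …, T−1`. -/
theorem shadow_tomography_likelihood_ratio_bound
    (d T M : ℕ) (hd : 1 ≤ d) (hT : 1 ≤ T) (hM : 2 ≤ M) (hMeven : Even M)
    (ε δ : ℝ) (hε0 : 0 < ε) (hε : ε ≤ 0.29) (hδ : 0 ≤ δ)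
    (O : ℕ → Matrix (Fin d) (Fin d) ℂ)
    (hherm : ∀ x < M, (O x).IsHermitian)
    (hnorm : ∀ x < M, opNorm (O x) ≤ 1)
    (hneg : ∀ x < M / 2, O (x + M / 2) = -O x)
    (ψ : ℕ → Fin d → ℂ)
    (hψ : ∀ t < T, ∑ i, Complex.normSq (ψ t i) = 1)
    (hδbound : ∀ t < T,
      (2 / M : ℝ) * ∑ x ∈ Finset.range (M / 2), (qform (O x) (ψ t)) ^ 2 ≤ δ) :
    Real.exp (-9 * T * ε ^ 2 * δ) ≤
        (1 / M : ℝ) * ∑ x ∈ Finset.range M, ∏ t ∈ Finset.range T, (1 + 3 * ε * qform (O x) (ψ t))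
      ∧ 1 - 9 * T * ε ^ 2 * δ ≤ Real.exp (-9 * T * ε ^ 2 * δ) :=
  shadow_tomography_likelihood_ratio_bound_general d T M hM hMeven ε δ hε0 hε O hnorm hneg ψ hψ
    hδbound
end

section
/- Let n, T ≥ 1, let 0 < ε ≤ 0.29, and let ψ₁, …, ψ_T ∈ ℂ^{2ⁿ} be unit vectors. Then (1/(2(4ⁿ − 1))) · ∑_{σ ∈ {+1,−1}} ∑_{s ≠ 0} ∏_{t=1}^{T} (1 + 3ε·σ·ψ_tᴴ P_s ψ_t) ≥ 1 − 9Tε²/(2ⁿ + 1), where the inner sum ranges over all n-qubit Pauli strings P_s with s not identically 0. -/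
/-!
For a Pauli string `P_s ≠ I`, the numbers `a_t = 3ε ψ_tᴴ P_s ψ_t` lie in `[-1, 1]`, because `P_s` is
a Hermitian involution and hence `-1 ≤ P_s ≤ 1`. So `A = ∏ (1 + a_t)` and `B = ∏ (1 - a_t)` are
nonnegative with `AB = ∏ (1 - a_t²) ∈ [1 - ∑ a_t², 1]`, whence `A + B ≥ 2√(AB) ≥ 2AB ≥ 2 - 2∑ a_t²`.
Averaging over `s ≠ 0` leaves `∑_{s ≠ 0} (ψᴴ P_s ψ)² = 2ⁿ - 1`: the Pauli strings satisfy the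
completeness relation `∑_s tr(M P_s)² = 2ⁿ tr(M²)`, which for `M = ψψᴴ` gives `2ⁿ`, and the identity
string contributes `1`.
-/

open Matrix Finset

namespace Matrix

variable {ι α β γ R : Type*} [Fintype ι]

def piKronecker [CommMonoid R] (A : ι → Matrix α β R) : Matrix (ι → α) (ι → β) R :=
  of fun i j => ∏ t, A t (i t) (j t)

theorem piKronecker_apply [CommMonoid R] (A : ι → Matrix α β R) (i : ι → α) (j : ι → β) :
    piKronecker A i j = ∏ t, A t (i t) (j t) := rfl

theorem piKronecker_mul_piKronecker [DecidableEq ι] [Fintype β] [CommSemiring R]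
    (A : ι → Matrix α β R) (B : ι → Matrix β γ R) :
    piKronecker A * piKronecker B = piKronecker fun t => A t * B t := by
  ext i k
  simp only [mul_apply, piKronecker_apply, ← prod_mul_distrib]
  exact (Fintype.prod_sum fun t b => A t (i t) b * B t b (k t)).symm

theorem piKronecker_one [DecidableEq α] [CommSemiring R] :
    piKronecker (fun _ : ι => (1 : Matrix α α R)) = 1 := by
  ext i j
  simp only [piKronecker_apply, one_apply, prod_boole, funext_iff, mem_univ, true_implies]

theorem conjTranspose_piKronecker [CommSemiring R] [StarRing R] (A : ι → Matrix α β R) :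
    (piKronecker A)ᴴ = piKronecker fun t => (A t)ᴴ := by
  ext i j
  simp only [conjTranspose_apply, piKronecker_apply, star_prod]

open scoped ComplexOrder in
theorem IsHermitian.abs_re_star_dotProduct_mulVec_le {𝕜 : Type*} [DecidableEq ι] [RCLike 𝕜]
    {A : Matrix ι ι 𝕜} (hA : A.IsHermitian) (hAA : A * A = 1) (x : ι → 𝕜) :
    |RCLike.re (star x ⬝ᵥ A *ᵥ x)| ≤ RCLike.re (star x ⬝ᵥ x) := by
  have key : ∀ B : Matrix ι ι 𝕜, B.IsHermitian → B * B = 1 →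
      RCLike.re (star x ⬝ᵥ B *ᵥ x) ≤ RCLike.re (star x ⬝ᵥ x) := by
    intro B hB hBB
    have hsq : (1 - B)ᴴ * (1 - B) = (2 : 𝕜) • (1 - B) := by
      rw [conjTranspose_sub, conjTranspose_one, hB.eq, sub_mul, mul_sub, mul_sub, hBB]
      simp only [one_mul, mul_one, two_smul]
      abel
    have h := (posSemidef_conjTranspose_mul_self (1 - B)).dotProduct_mulVec_nonneg x
    rw [hsq, smul_mulVec, dotProduct_smul, smul_eq_mul, sub_mulVec, one_mulVec,
      dotProduct_sub] at h
    have h' := (RCLike.nonneg_iff.mp h).1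
    simp only [RCLike.ofNat_mul_re, map_sub] at h'
    linarith
  have hneg := key (-A) hA.neg (by rw [neg_mul_neg, hAA])
  rw [neg_mulVec, dotProduct_neg, map_neg] at hneg
  exact abs_le.mpr ⟨neg_le.mp hneg, key A hA hAA⟩

end Matrix

theorem pauli_isHermitian (a : Fin 4) : (pauli a).IsHermitian := by
  ext i j
  fin_cases a <;> fin_cases i <;> fin_cases j <;> simp [pauli]

theorem pauli_mul_self (a : Fin 4) : pauli a * pauli a = 1 := by
  ext i j
  fin_cases a <;> fin_cases i <;> fin_cases j <;> simp [pauli, mul_apply, Fin.sum_univ_two]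

theorem sum_pauli_apply_mul_pauli_apply (i j k l : Fin 2) :
    ∑ a, pauli a i j * pauli a k l = if i = l ∧ j = k then 2 else 0 := by
  fin_cases i <;> fin_cases j <;> fin_cases k <;> fin_cases l <;>
    simp [pauli, Fin.sum_univ_four] <;> norm_num

section PauliString

variable {n : ℕ}

theorem pauliString_eq_piKronecker (s : Fin n → Fin 4) :
    pauliString n s = piKronecker fun t => pauli (s t) := rfl

theorem pauliString_zero : pauliString n 0 = 1 := by
  rw [pauliString_eq_piKronecker]
  exact piKronecker_one

theorem pauliString_isHermitian (s : Fin n → Fin 4) : (pauliString n s).IsHermitian := by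
  rw [IsHermitian, pauliString_eq_piKronecker, conjTranspose_piKronecker]
  simp only [(pauli_isHermitian _).eq]

theorem pauliString_mul_self (s : Fin n → Fin 4) : pauliString n s * pauliString n s = 1 := by
  rw [pauliString_eq_piKronecker, piKronecker_mul_piKronecker]
  simp only [pauli_mul_self]
  exact piKronecker_one

theorem sum_pauliString_apply_mul_pauliString_apply (i j k l : Fin n → Fin 2) :
    ∑ s, pauliString n s i j * pauliString n s k l = if i = l ∧ j = k then 2 ^ n else 0 := by
  simp only [pauliString, of_apply, ← prod_mul_distrib]
  rw [← Fintype.prod_sum fun t a => pauli a (i t) (j t) * pauli a (k t) (l t)]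
  simp only [sum_pauli_apply_mul_pauli_apply, prod_ite_zero, prod_const, card_univ,
    Fintype.card_fin, mem_univ, true_implies, funext_iff, forall_and]

theorem sum_trace_mul_pauliString_sq (M : Matrix (Fin n → Fin 2) (Fin n → Fin 2) ℂ) :
    ∑ s, trace (M * pauliString n s) ^ 2 = 2 ^ n * trace (M * M) := by
  simp only [trace, Matrix.diag, mul_apply, sq, sum_mul_sum]
  simp_rw [Finset.sum_comm (s := (univ : Finset (Fin n → Fin 4)))]
  simp_rw [mul_mul_mul_comm _ (pauliString n _ _ _), ← mul_sum,
    sum_pauliString_apply_mul_pauliString_apply, mul_ite, mul_zero, ite_and]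
  simp only [sum_ite_irrel, sum_const_zero, sum_ite_eq, sum_ite_eq', mem_univ, if_true, mul_sum]
  exact sum_congr rfl fun _ _ => sum_congr rfl fun _ _ => mul_comm _ _

end PauliString

section QuadraticForm

variable {ι : Type*} [Fintype ι]

theorem qform_eq_re (A : Matrix ι ι ℂ) (ψ : ι → ℂ) :
    qform A ψ = (star ψ ⬝ᵥ A *ᵥ ψ).re := by
  simp only [qform, dotProduct, mulVec, mul_sum, Pi.star_apply, RCLike.star_def, mul_assoc]

theorem Matrix.IsHermitian.coe_qform {A : Matrix ι ι ℂ} (hA : A.IsHermitian) (ψ : ι → ℂ) :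
    (qform A ψ : ℂ) = star ψ ⬝ᵥ A *ᵥ ψ :=
  Complex.ext (by rw [Complex.ofReal_re, qform_eq_re])
    (hA.im_star_dotProduct_mulVec_self ψ).symm

theorem star_dotProduct_self_eq_sum_normSq (ψ : ι → ℂ) :
    star ψ ⬝ᵥ ψ = ((∑ i, Complex.normSq (ψ i) : ℝ) : ℂ) := by
  simp [dotProduct, Complex.normSq_eq_conj_mul_self]

theorem trace_vecMulVec_star_mul (A : Matrix ι ι ℂ) (ψ : ι → ℂ) :
    trace (vecMulVec ψ (star ψ) * A) = star ψ ⬝ᵥ A *ᵥ ψ := by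
  rw [vecMulVec_mul, trace_vecMulVec, dotProduct_comm, dotProduct_mulVec]

theorem trace_vecMulVec_star_mul_self (ψ : ι → ℂ) :
    trace (vecMulVec ψ (star ψ) * vecMulVec ψ (star ψ)) = (star ψ ⬝ᵥ ψ) ^ 2 := by
  rw [vecMulVec_mul_vecMulVec, trace_vecMulVec, dotProduct_smul, dotProduct_comm, smul_eq_mul, sq]

end QuadraticForm

section PauliExpectation

variable {n : ℕ} (ψ : (Fin n → Fin 2) → ℂ)

theorem abs_qform_pauliString_le (s : Fin n → Fin 4) :
    |qform (pauliString n s) ψ| ≤ ∑ i, Complex.normSq (ψ i) := by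
  simpa only [qform_eq_re, star_dotProduct_self_eq_sum_normSq, RCLike.re_to_complex,
    Complex.ofReal_re] using
    (pauliString_isHermitian s).abs_re_star_dotProduct_mulVec_le (pauliString_mul_self s) ψ

theorem qform_pauliString_zero : qform (pauliString n 0) ψ = ∑ i, Complex.normSq (ψ i) := by
  rw [qform_eq_re, pauliString_zero, one_mulVec, star_dotProduct_self_eq_sum_normSq,
    Complex.ofReal_re]

theorem sum_qform_pauliString_sq :
    ∑ s, qform (pauliString n s) ψ ^ 2 = 2 ^ n * (∑ i, Complex.normSq (ψ i)) ^ 2 := by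
  have h := sum_trace_mul_pauliString_sq (vecMulVec ψ (star ψ))
  rw [trace_vecMulVec_star_mul_self, star_dotProduct_self_eq_sum_normSq] at h
  simp only [trace_vecMulVec_star_mul, ← (pauliString_isHermitian _).coe_qform] at h
  exact_mod_cast h

theorem sum_ne_zero_qform_pauliString_sq (hψ : ∑ i, Complex.normSq (ψ i) = 1) :
    ∑ s ∈ univ.filter (· ≠ 0), qform (pauliString n s) ψ ^ 2 = 2 ^ n - 1 := by
  rw [filter_ne', sum_erase_eq_sub (mem_univ 0), sum_qform_pauliString_sq,
    qform_pauliString_zero, hψ]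
  ring

end PauliExpectation

theorem one_sub_sum_le_prod_one_sub {ι : Type*} (s : Finset ι) (b : ι → ℝ)
    (hb₀ : ∀ i ∈ s, 0 ≤ b i) (hb₁ : ∀ i ∈ s, b i ≤ 1) :
    1 - ∑ i ∈ s, b i ≤ ∏ i ∈ s, (1 - b i) := by
  classical
  induction s using Finset.induction_on with
  | empty => simp
  | insert a s ha ih =>
    rw [sum_insert ha, prod_insert ha]
    have hS : 0 ≤ ∑ i ∈ s, b i := sum_nonneg fun i hi => hb₀ i (mem_insert_of_mem hi)
    have hP := ih (fun i hi => hb₀ i (mem_insert_of_mem hi))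
      fun i hi => hb₁ i (mem_insert_of_mem hi)
    have ha₀ := hb₀ a (mem_insert_self a s)
    have ha₁ := hb₁ a (mem_insert_self a s)
    nlinarith [mul_le_mul_of_nonneg_left hP (sub_nonneg.mpr ha₁)]

theorem two_sub_two_mul_sum_sq_le_prod_one_add_add_prod_one_sub {ι : Type*} (s : Finset ι)
    (a : ι → ℝ) (ha : ∀ i ∈ s, |a i| ≤ 1) :
    2 - 2 * ∑ i ∈ s, a i ^ 2 ≤ ∏ i ∈ s, (1 + a i) + ∏ i ∈ s, (1 - a i) := by
  have ha' : ∀ i ∈ s, -1 ≤ a i ∧ a i ≤ 1 := fun i hi => abs_le.mp (ha i hi)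
  have hsq : ∀ i ∈ s, a i ^ 2 ≤ 1 := fun i hi => (sq_le_one_iff_abs_le_one _).mpr (ha i hi)
  set A := ∏ i ∈ s, (1 + a i)
  set B := ∏ i ∈ s, (1 - a i)
  have hA : 0 ≤ A := prod_nonneg fun i hi => by linarith [ha' i hi]
  have hB : 0 ≤ B := prod_nonneg fun i hi => by linarith [ha' i hi]
  have hAB : A * B = ∏ i ∈ s, (1 - a i ^ 2) := by
    rw [← prod_mul_distrib]
    exact prod_congr rfl fun i _ => by ring
  have hAB₁ : A * B ≤ 1 := hAB ▸ prod_le_one (fun i hi => sub_nonneg.mpr (hsq i hi))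
    fun i _ => sub_le_self _ (sq_nonneg _)
  have hAB₀ : 1 - ∑ i ∈ s, a i ^ 2 ≤ A * B :=
    hAB ▸ one_sub_sum_le_prod_one_sub s _ (fun i _ => sq_nonneg _) hsq
  -- `A + B ≥ 2 √(AB) ≥ 2 AB` because `AB ≤ 1`
  nlinarith [sq_nonneg (A - B), mul_nonneg hA hB]

theorem two_mul_card_sub_le_sum_prod_one_add_add_prod_one_sub {σ ι : Type*} (S : Finset σ)
    (u : Finset ι) (a : σ → ι → ℝ) (ha : ∀ s ∈ S, ∀ t ∈ u, |a s t| ≤ 1) :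
    2 * #S - 2 * ∑ t ∈ u, ∑ s ∈ S, a s t ^ 2 ≤
      ∑ s ∈ S, (∏ t ∈ u, (1 + a s t) + ∏ t ∈ u, (1 - a s t)) := by
  have h := sum_le_sum fun s hs =>
    two_sub_two_mul_sum_sq_le_prod_one_add_add_prod_one_sub u (a s) (ha s hs)
  rwa [sum_sub_distrib, sum_const, nsmul_eq_mul, ← mul_sum, sum_comm, mul_comm (#S : ℝ)] at h

theorem pauli_shadow_tomography_likelihood_ratio_bound_general
    (n T : ℕ) (hn : 1 ≤ n)
    (ε : ℝ) (hε0 : 0 < ε) (hε : ε ≤ 0.29)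
    (ψ : ℕ → (Fin n → Fin 2) → ℂ)
    (hψ : ∀ t < T, ∑ i, Complex.normSq (ψ t i) = 1) :
    1 - 9 * T * ε ^ 2 / (2 ^ n + 1) ≤
      (1 / (2 * (4 ^ n - 1)) : ℝ) *
        ∑ s ∈ Finset.univ.filter (fun s : Fin n → Fin 4 => s ≠ 0),
          ((∏ t ∈ Finset.range T, (1 + 3 * ε * qform (pauliString n s) (ψ t))) +
            (∏ t ∈ Finset.range T, (1 + 3 * ε * (-1) * qform (pauliString n s) (ψ t)))) := by
  set S := univ.filter fun s : Fin n → Fin 4 => s ≠ 0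
  have hbound : ∀ s ∈ S, ∀ t ∈ range T, |3 * ε * qform (pauliString n s) (ψ t)| ≤ 1 := by
    intro s _ t ht
    have hq := abs_qform_pauliString_le (ψ t) s
    rw [hψ t (mem_range.mp ht)] at hq
    calc |3 * ε * qform (pauliString n s) (ψ t)|
        = 3 * ε * |qform (pauliString n s) (ψ t)| := by rw [abs_mul, abs_of_pos (by positivity)]
      _ ≤ 3 * ε * 1 := by gcongr
      _ ≤ 1 := by linarith
  have hsum : ∑ t ∈ range T, ∑ s ∈ S, (3 * ε * qform (pauliString n s) (ψ t)) ^ 2 =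
      9 * ε ^ 2 * T * (2 ^ n - 1) := by
    simp only [mul_pow, ← mul_sum]
    rw [sum_congr rfl fun t ht => by
      rw [sum_ne_zero_qform_pauliString_sq _ (hψ t (mem_range.mp ht))]]
    simp only [sum_const, card_range, nsmul_eq_mul]
    ring
  have hcard : (#S : ℝ) = 4 ^ n - 1 := by
    rw [show S = univ.erase 0 from filter_ne' _ _, card_erase_of_mem (mem_univ _), card_univ,
      Fintype.card_fun, Fintype.card_fin, Fintype.card_fin, Nat.cast_sub (Nat.one_le_pow' n 3),
      Nat.cast_pow]
    norm_num
  have hlower := two_mul_card_sub_le_sum_prod_one_add_add_prod_one_sub S (range T) _ hbound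
  rw [hsum, hcard] at hlower
  simp only [mul_neg_one, neg_mul, ← sub_eq_add_neg]
  have h4 : (4 : ℝ) ^ n = (2 ^ n) ^ 2 := by rw [← pow_mul, mul_comm, pow_mul]; norm_num
  have h2 : (2 : ℝ) ≤ 2 ^ n := le_self_pow₀ one_le_two (by omega)
  have hpos : (0 : ℝ) < 4 ^ n - 1 := by nlinarith
  calc 1 - 9 * T * ε ^ 2 / (2 ^ n + 1) =
        1 / (2 * (4 ^ n - 1)) * (2 * (4 ^ n - 1) - 2 * (9 * ε ^ 2 * T * (2 ^ n - 1))) := by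
        field_simp
        rw [h4]
        ring
    _ ≤ _ := mul_le_mul_of_nonneg_left hlower (by positivity)

/-- Likelihood-ratio bound underlying the `Ω(2ⁿ/ε²)` shadow tomography
lower bound with Pauli observables: summing over both signs `σ ∈ {+1, −1}` (the two
products below) and over all non-identity Pauli strings `s ≠ 0`,
`(1/(2(4ⁿ−1))) ∑_{σ,s} ∏_{t<T} (1 + 3εσ·ψ_tᴴ P_s ψ_t) ≥ 1 − 9Tε²/(2ⁿ+1)`. -/
theorem pauli_shadow_tomography_likelihood_ratio_bound
    (n T : ℕ) (hn : 1 ≤ n) (hT : 1 ≤ T)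
    (ε : ℝ) (hε0 : 0 < ε) (hε : ε ≤ 0.29)
    (ψ : ℕ → (Fin n → Fin 2) → ℂ)
    (hψ : ∀ t < T, ∑ i, Complex.normSq (ψ t i) = 1) :
    1 - 9 * T * ε ^ 2 / (2 ^ n + 1) ≤
      (1 / (2 * (4 ^ n - 1)) : ℝ) *
        ∑ s ∈ Finset.univ.filter (fun s : Fin n → Fin 4 => s ≠ 0),
          ((∏ t ∈ Finset.range T, (1 + 3 * ε * qform (pauliString n s) (ψ t))) +
            (∏ t ∈ Finset.range T, (1 + 3 * ε * (-1) * qform (pauliString n s) (ψ t)))) :=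
  pauli_shadow_tomography_likelihood_ratio_bound_general n T hn ε hε0 hε ψ hψ
end

section
/- Let T ≥ 1 and let ψ₁, …, ψ_T be unit vectors in a complex inner product space. Then the real part of ∑_{π ∈ S_T} ∏_{t=1}^{T} ⟨ψ_t, ψ_{π(t)}⟩ is at least 1, where S_T denotes the group of permutations of {1,…,T} and ⟨·,·⟩ is the Hermitian inner product. (This sum equals ∑_{π ∈ S_T} Tr(Perm(π) · |ψ₁⟩⟨ψ₁| ⊗ ⋯ ⊗ |ψ_T⟩⟨ψ_T|), i.e., T! times the squared norm of the projection of ψ₁ ⊗ ⋯ ⊗ ψ_T onto the symmetric subspace, up to normalization.) -/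
/-!
The sum is the permanent of the Gram matrix of the `ψ t`, a positive semidefinite matrix with unit
diagonal, so the claim is Marcus' inequality `∏ i, A i i ≤ per A` for positive semidefinite `A`.
By induction it reduces to `A 0 0 * per A' ≤ per A`, where `A'` deletes the first row and column.
Expanding `per A` along the first column and the remaining minors along the first row, the excess
`per A - A 0 0 * per A'` is the quadratic form at `c j = A 0 (j + 1)` of the matrix `M` of
permanents of the `(i, j)`-minors of `A'`. Up to the factor `m!`, `M` is a sum of blocks of the
matrix `∏ s, A' (i.succAbove (τ s)) (j.succAbove (ρ s))` indexed by pairs `(i, τ)`, which is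
positive semidefinite by the Schur product theorem.
-/

open Finset

namespace Equiv.Perm

def extendSuccAbove {n : ℕ} (j i : Fin (n + 1)) (π : Perm (Fin n)) : Perm (Fin (n + 1)) :=
  (finSuccEquiv' j).trans ((optionCongr π).trans (finSuccEquiv' i).symm)

variable {n : ℕ} (j i : Fin (n + 1)) (π : Perm (Fin n))

@[simp]
lemma extendSuccAbove_apply_self : extendSuccAbove j i π j = i := by
  simp [extendSuccAbove, finSuccEquiv'_at]

@[simp]
lemma extendSuccAbove_apply_succAbove (s : Fin n) :
    extendSuccAbove j i π (j.succAbove s) = i.succAbove (π s) := by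
  simp [extendSuccAbove, finSuccEquiv'_succAbove, finSuccEquiv'_symm_some]

lemma bijective_extendSuccAbove :
    Function.Bijective fun p : Fin (n + 1) × Perm (Fin n) => extendSuccAbove j p.1 p.2 := by
  rw [Fintype.bijective_iff_injective_and_card]
  refine ⟨fun ⟨i, π⟩ ⟨i', π'⟩ h => ?_, by simp [Fintype.card_perm, Nat.factorial_succ]⟩
  obtain rfl : i = i' := by simpa using congr($h j)
  refine Prod.ext rfl (Equiv.ext fun s => Fin.succAbove_right_injective (p := i) ?_)
  simpa using congr($h (j.succAbove s))

end Equiv.Perm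

open scoped ComplexOrder

namespace Matrix

open Equiv Equiv.Perm

section permanent

variable {R : Type*} [CommSemiring R]

theorem permanent_succ_column {n : ℕ} (M : Matrix (Fin (n + 1)) (Fin (n + 1)) R)
    (j : Fin (n + 1)) :
    M.permanent = ∑ i, M i j * (M.submatrix i.succAbove j.succAbove).permanent := by
  rw [permanent, ← (bijective_extendSuccAbove j).sum_comp, Fintype.sum_prod_type]
  refine sum_congr rfl fun i _ => ?_
  simp only [permanent, mul_sum, Fin.prod_univ_succAbove _ j, extendSuccAbove_apply_self,
    extendSuccAbove_apply_succAbove, submatrix_apply]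

theorem permanent_succ_row {n : ℕ} (M : Matrix (Fin (n + 1)) (Fin (n + 1)) R)
    (i : Fin (n + 1)) :
    M.permanent = ∑ j, M i j * (M.submatrix i.succAbove j.succAbove).permanent := by
  simpa [← transpose_submatrix, permanent_transpose] using Mᵀ.permanent_succ_column i

theorem factorial_mul_permanent {n : Type*} [DecidableEq n] [Fintype n] (M : Matrix n n R) :
    ((Fintype.card n).factorial : R) * M.permanent =
      ∑ τ : Perm n, ∑ ρ : Perm n, ∏ s, M (τ s) (ρ s) := by
  have h (ρ : Perm n) : ∑ τ : Perm n, ∏ s, M (τ s) (ρ s) = M.permanent := by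
    rw [permanent, ← Equiv.sum_comp (Equiv.mulRight ρ)]
    exact sum_congr rfl fun σ _ => Equiv.prod_comp ρ fun i => M (σ i) i
  rw [sum_comm, sum_congr rfl fun ρ _ => h ρ, sum_const, card_univ, Fintype.card_perm,
    nsmul_eq_mul]

end permanent

section posSemidef

variable {𝕜 : Type*} [RCLike 𝕜]

theorem posSemidef_hadamard_prod {ι κ : Type*} [Finite κ] {B : ι → Matrix κ κ 𝕜} (s : Finset ι)
    (hB : ∀ i ∈ s, (B i).PosSemidef) : (of fun a b => ∏ i ∈ s, B i a b).PosSemidef := by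
  classical
  induction s using Finset.induction_on with
  | empty => simpa [vecMulVec] using posSemidef_vecMulVec_self_star fun _ : κ => (1 : 𝕜)
  | insert i s hi ih =>
    have h : (of fun a b => ∏ j ∈ insert i s, B j a b) =
        B i ⊙ of fun a b => ∏ j ∈ s, B j a b := by
      ext a b
      simp [prod_insert hi, hadamard_apply]
    rw [h]
    exact (hB i (mem_insert_self i s)).hadamard (ih fun j hj => hB j (mem_insert_of_mem hj))

theorem PosSemidef.sum_snd {ι α R : Type*} [Fintype ι] [DecidableEq ι] [Fintype α]
    [CommRing R] [PartialOrder R] [StarRing R] [StarOrderedRing R]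
    {K : Matrix (ι × α) (ι × α) R} (hK : K.PosSemidef) :
    (of fun i j => ∑ a, ∑ b, K (i, a) (j, b)).PosSemidef := by
  let L : Matrix (ι × α) ι R := of fun p j => if p.1 = j then 1 else 0
  convert hK.conjTranspose_mul_mul_same L using 1
  ext i j
  simp only [L, mul_apply, conjTranspose_apply, of_apply, Fintype.sum_prod_type]
  simp [apply_ite (star : R → R), ite_mul, sum_ite_irrel]
  exact Finset.sum_comm

theorem PosSemidef.permanent_submatrix_succAbove {m : ℕ}
    {B : Matrix (Fin (m + 1)) (Fin (m + 1)) 𝕜} (hB : B.PosSemidef) :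
    (of fun i j : Fin (m + 1) => (B.submatrix i.succAbove j.succAbove).permanent).PosSemidef := by
  have hK : (of fun p q : Fin (m + 1) × Perm (Fin m) =>
      ∏ s, B (p.1.succAbove (p.2 s)) (q.1.succAbove (q.2 s))).PosSemidef :=
    posSemidef_hadamard_prod univ fun s _ =>
      hB.submatrix fun p : Fin (m + 1) × Perm (Fin m) => p.1.succAbove (p.2 s)
  have h : (of fun i j : Fin (m + 1) => (B.submatrix i.succAbove j.succAbove).permanent) =
      ((m.factorial : ℝ)⁻¹) • of fun i j : Fin (m + 1) => ∑ τ : Perm (Fin m), ∑ ρ : Perm (Fin m),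
        ∏ s, B (i.succAbove (τ s)) (j.succAbove (ρ s)) := by
    ext i j
    have := factorial_mul_permanent (B.submatrix i.succAbove j.succAbove)
    simp only [submatrix_apply, Fintype.card_fin] at this
    simp [← this, RCLike.real_smul_eq_coe_mul, Nat.factorial_ne_zero]
  rw [h]
  exact hK.sum_snd.smul (by positivity)

theorem PosSemidef.mul_permanent_submatrix_succ_le {n : ℕ}
    {A : Matrix (Fin (n + 1)) (Fin (n + 1)) 𝕜} (hA : A.PosSemidef) :
    A 0 0 * (A.submatrix Fin.succ Fin.succ).permanent ≤ A.permanent := by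
  rw [permanent_succ_column A 0, Fin.sum_univ_succ]
  simp only [Fin.succAbove_zero]
  refine le_add_of_nonneg_right ?_
  cases n with
  | zero => simp
  | succ m =>
    set A' := A.submatrix Fin.succ Fin.succ
    have hexp (q : Fin (m + 1)) : (A.submatrix q.succ.succAbove Fin.succ).permanent =
        ∑ j : Fin (m + 1), A 0 j.succ * (A'.submatrix q.succAbove j.succAbove).permanent := by
      rw [permanent_succ_row _ 0]
      simp [A', Function.comp_def, Fin.succ_succAbove_succ]
    have key := (hA.submatrix Fin.succ).permanent_submatrix_succAbove.dotProduct_mulVec_nonneg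
      fun j : Fin (m + 1) => A 0 j.succ
    convert key using 1
    simp only [dotProduct, mulVec, hexp, mul_sum, of_apply, Pi.star_apply, hA.isHermitian.apply]
    exact sum_congr rfl fun q _ => sum_congr rfl fun j _ => by ring

theorem PosSemidef.prod_diag_le_permanent {n : ℕ} {A : Matrix (Fin n) (Fin n) 𝕜}
    (hA : A.PosSemidef) : ∏ i, A i i ≤ A.permanent := by
  induction n with
  | zero => simp [permanent_isEmpty]
  | succ n ih =>
    calc ∏ i, A i i = A 0 0 * ∏ i : Fin n, A i.succ i.succ := Fin.prod_univ_succ _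
      _ ≤ A 0 0 * (A.submatrix Fin.succ Fin.succ).permanent :=
        mul_le_mul_of_nonneg_left (ih (hA.submatrix _)) hA.diag_nonneg
      _ ≤ A.permanent := hA.mul_permanent_submatrix_succ_le

end posSemidef

end Matrix

open Matrix in
theorem sum_perm_inner_products_ge_one_general
    {E : Type*} [NormedAddCommGroup E] [InnerProductSpace ℂ E]
    (T : ℕ) (ψ : Fin T → E) (hψ : ∀ t, ‖ψ t‖ = 1) :
    1 ≤ (∑ π : Equiv.Perm (Fin T), ∏ t, (inner ℂ (ψ t) (ψ (π t)) : ℂ)).re := by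
  -- `permanent M` multiplies the entries `M (σ i) i`, hence the transpose.
  have hsum : ∑ π : Equiv.Perm (Fin T), ∏ t, (inner ℂ (ψ t) (ψ (π t)) : ℂ) =
      (gram ℂ ψ)ᵀ.permanent := rfl
  have hdiag : ∏ t, (gram ℂ ψ)ᵀ t t = 1 := by
    simp [gram_apply, inner_self_eq_norm_sq_to_K, hψ]
  have hmarcus := (posSemidef_gram ℂ ψ).transpose.prod_diag_le_permanent
  rw [hsum]
  exact (Complex.le_def.mp (hdiag ▸ hmarcus)).1

/-- For any `T ≥ 1` unit vectors `ψ₁, …, ψ_T` in a complex inner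
product space, `Re (∑_{π ∈ S_T} ∏_t ⟨ψ_t, ψ_{π t}⟩) ≥ 1`. -/
theorem sum_perm_inner_products_ge_one
    {E : Type*} [NormedAddCommGroup E] [InnerProductSpace ℂ E]
    (T : ℕ) (hT : 1 ≤ T) (ψ : Fin T → E) (hψ : ∀ t, ‖ψ t‖ = 1) :
    1 ≤ (∑ π : Equiv.Perm (Fin T), ∏ t, (inner ℂ (ψ t) (ψ (π t)) : ℂ)).re :=
  sum_perm_inner_products_ge_one_general T ψ hψ
end

section
/- Let n, k, m ≥ 0 with n ≥ 1. Let Σ be a positive-semidefinite 2^k × 2^k complex matrix, and let M be a complex matrix whose rows are indexed by {1,…,2^k} × {1,…,2^m} and whose columns are indexed by {1,…,2^k} × {1,…,2ⁿ} (i.e., M : ℂ^{2^k} ⊗ ℂ^{2ⁿ} → ℂ^{2^k} ⊗ ℂ^{2^m}). For a matrix B indexed by {1,…,2^k} × {1,…,2^m} on both sides, define the partial trace Tr_{>k}(B) as the 2^k × 2^k matrix with entries Tr_{>k}(B)(i,i') = ∑_{m̄} B((i,m̄),(i',m̄)). Then (1/(4ⁿ − 1)) · ∑_{s ≠ 0}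 ‖Tr_{>k}(M (Σ ⊗ (P_s/2ⁿ)) Mᴴ)‖_tr² ≤ (2^{k−n}/(4ⁿ − 1)) · [Tr(Mᴴ M (Σ ⊗ I_{2ⁿ}))]², where the sum ranges over all n-qubit Pauli strings P_s with s not identically 0, and Σ ⊗ A denotes the Kronecker product compatible with the chosen index pairing. -/
open Matrix Finset
open scoped Kronecker ComplexOrder

/-- The partial trace over the second tensor factor:
`ptr B (i, i') = ∑ b, B (i, b) (i', b)`. -/
noncomputable def ptr {α β : Type*} [Fintype β] (B : Matrix (α × β) (α × β) ℂ) :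
    Matrix α α ℂ :=
  Matrix.of fun i i' => ∑ b, B (i, b) (i', b)

/-- The trace norm `‖A‖_tr`: the trace of the positive-semidefinite square root of
`Aᴴ A` (the sum of singular values of `A`). -/
noncomputable def traceNorm {ι : Type*} [Fintype ι] [DecidableEq ι] (A : Matrix ι ι ℂ) : ℝ :=
  (((Matrix.posSemidef_conjTranspose_mul_self A).1.eigenvectorUnitary : Matrix ι ι ℂ) *
      Matrix.diagonal ((fun x : ℝ => (x : ℂ)) ∘ Real.sqrt ∘ (Matrix.posSemidef_conjTranspose_mul_self A).1.eigenvalues) *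
      (star (Matrix.posSemidef_conjTranspose_mul_self A).1.eigenvectorUnitary : Matrix ι ι ℂ)).trace.re

open ComplexConjugate

/-!
Write `Φ Q = Tr_{>k}(M (Σ ⊗ Q) Mᴴ)`, a completely positive map, and let `J` be its Choi matrix:
`J` is positive semidefinite and `Tr J = Tr(Mᴴ M (Σ ⊗ I))`. Each `‖Φ(P_s/2ⁿ)‖_tr²` is at most
`2^k` times the squared Frobenius norm (Cauchy–Schwarz on the singular values). The Pauli strings
satisfy `∑_s P_s(a,b) conj P_s(c,d) = 2ⁿ δ_{ac} δ_{bd}`, so by Parseval the Frobenius norms of the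
`Φ(P_s)`, summed over all `s`, give `2ⁿ ‖J‖_F²`; finally `‖J‖_F² ≤ (Tr J)²` because the `2 × 2`
minors of `J` give `|J_xy|² ≤ J_xx J_yy`. Including `s = 0` only enlarges the left-hand side.
-/

section TraceNorm

variable {ι : Type*} [Fintype ι] [DecidableEq ι]

lemma traceNorm_eq_sum_sqrt_eigenvalues (A : Matrix ι ι ℂ) :
    traceNorm A = ∑ i, √((posSemidef_conjTranspose_mul_self A).1.eigenvalues i) := by
  rw [traceNorm, trace_mul_cycle, Unitary.coe_star_mul_self, one_mul, trace_diagonal,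
    Complex.re_sum]
  simp

lemma re_trace_conjTranspose_mul_self {m n : Type*} [Fintype m] [Fintype n]
    (A : Matrix m n ℂ) : (Aᴴ * A).trace.re = ∑ i, ∑ j, Complex.normSq (A i j) := by
  simp only [trace, Matrix.diag, mul_apply, conjTranspose_apply, Complex.star_def, Complex.re_sum,
    ← Complex.normSq_eq_conj_mul_self, Complex.ofReal_re]
  exact sum_comm

lemma traceNorm_sq_le_card_mul_sum_normSq (A : Matrix ι ι ℂ) :
    traceNorm A ^ 2 ≤ Fintype.card ι * ∑ i, ∑ j, Complex.normSq (A i j) := by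
  have hA := posSemidef_conjTranspose_mul_self A
  calc traceNorm A ^ 2 ≤ Fintype.card ι * ∑ i, √(hA.1.eigenvalues i) ^ 2 := by
        rw [traceNorm_eq_sum_sqrt_eigenvalues]; exact sq_sum_le_card_mul_sum_sq
    _ = Fintype.card ι * (Aᴴ * A).trace.re := by
        simp [Real.sq_sqrt (hA.eigenvalues_nonneg _), hA.1.trace_eq_sum_eigenvalues]
    _ = _ := by rw [re_trace_conjTranspose_mul_self]

end TraceNorm

namespace Matrix.PosSemidef

variable {ι : Type*} {K : Matrix ι ι ℂ}

lemma normSq_apply_le (hK : K.PosSemidef) (x y : ι) :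
    Complex.normSq (K x y) ≤ (K x x).re * (K y y).re := by
  have hdet := (hK.submatrix ![x, y]).det_nonneg
  rw [det_fin_two] at hdet
  have hyx : K y x = conj (K x y) := by simpa using (hK.1.apply y x).symm
  have hxx : K x x = (K x x).re := (hK.1.coe_re_apply_self x).symm
  have hyy : K y y = (K y y).re := (hK.1.coe_re_apply_self y).symm
  simp only [submatrix_apply, Matrix.cons_val_zero, Matrix.cons_val_one, hyx,
    Complex.mul_conj] at hdet
  rw [hxx, hyy] at hdet
  exact_mod_cast sub_nonneg.mp hdet

lemma sum_normSq_le_re_trace_sq [Fintype ι] (hK : K.PosSemidef) :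
    ∑ x, ∑ y, Complex.normSq (K x y) ≤ K.trace.re ^ 2 := by
  calc ∑ x, ∑ y, Complex.normSq (K x y) ≤ ∑ x, ∑ y, (K x x).re * (K y y).re :=
        sum_le_sum fun x _ => sum_le_sum fun y _ => hK.normSq_apply_le x y
    _ = K.trace.re ^ 2 := by
        rw [sq, trace, Complex.re_sum, sum_mul_sum]; rfl

end Matrix.PosSemidef

lemma sum_normSq_sum_mul_of_orthogonal {σ ι : Type*} [Fintype σ] [Fintype ι] [DecidableEq ι]
    (v : σ → ι → ℂ) (C : ℝ) (hv : ∀ x y, ∑ s, v s x * conj (v s y) = if x = y then (C : ℂ) else 0)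
    (E : ι → ℂ) : ∑ s, Complex.normSq (∑ x, E x * v s x) = C * ∑ x, Complex.normSq (E x) := by
  have expand : ∀ s, ((Complex.normSq (∑ x, E x * v s x) : ℝ) : ℂ) =
      ∑ x, ∑ y, E x * conj (E y) * (v s x * conj (v s y)) := fun s => by
    rw [← Complex.mul_conj, map_sum, sum_mul_sum]
    exact sum_congr rfl fun x _ => sum_congr rfl fun y _ => by rw [map_mul]; ring
  apply Complex.ofReal_injective
  push_cast
  simp_rw [expand]
  rw [sum_comm]
  simp_rw [sum_comm (s := (univ : Finset σ)), ← mul_sum, hv, mul_ite, mul_zero, sum_ite_eq,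
    mem_univ, if_true, mul_sum, Complex.mul_conj]
  exact sum_congr rfl fun x _ => mul_comm _ _

section Choi

variable {α γ : Type*} [Fintype γ] [DecidableEq γ]

def choiMatrix (Φ : Matrix γ γ ℂ →ₗ[ℂ] Matrix α α ℂ) : Matrix (α × γ) (α × γ) ℂ :=
  of fun x y => Φ (single x.2 y.2 1) x.1 y.1

lemma apply_eq_sum_choiMatrix (Φ : Matrix γ γ ℂ →ₗ[ℂ] Matrix α α ℂ) (Q : Matrix γ γ ℂ)
    (i i' : α) : Φ Q i i' = ∑ a, ∑ a', choiMatrix Φ (i, a) (i', a') * Q a a' := by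
  conv_lhs => rw [matrix_eq_sum_single Q]
  simp only [map_sum, Matrix.sum_apply, choiMatrix, of_apply]
  refine sum_congr rfl fun a _ => sum_congr rfl fun a' _ => ?_
  rw [show single a a' (Q a a') = Q a a' • single a a' 1 by rw [smul_single, smul_eq_mul, mul_one],
    map_smul, Matrix.smul_apply, smul_eq_mul, mul_comm]

lemma trace_choiMatrix [Fintype α] (Φ : Matrix γ γ ℂ →ₗ[ℂ] Matrix α α ℂ) :
    (choiMatrix Φ).trace = (Φ 1).trace := by
  rw [← sum_single_one, map_sum, trace_sum, trace, Fintype.sum_prod_type, sum_comm]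
  simp [choiMatrix, trace]

end Choi

lemma sum_normSq_apply_of_orthogonal {σ α γ : Type*} [Fintype σ] [Fintype α] [Fintype γ]
    [DecidableEq γ] (P : σ → Matrix γ γ ℂ) (C : ℝ)
    (hP : ∀ p q : γ × γ, ∑ s, P s p.1 p.2 * conj (P s q.1 q.2) = if p = q then (C : ℂ) else 0)
    (Φ : Matrix γ γ ℂ →ₗ[ℂ] Matrix α α ℂ) :
    ∑ s, ∑ i, ∑ i', Complex.normSq (Φ (P s) i i') =
      C * ∑ x, ∑ y, Complex.normSq (choiMatrix Φ x y) := by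
  have hΦ : ∀ s i i', Φ (P s) i i' =
      ∑ p : γ × γ, choiMatrix Φ (i, p.1) (i', p.2) * P s p.1 p.2 := fun s i i' => by
    rw [apply_eq_sum_choiMatrix, Fintype.sum_prod_type]
  have hrhs : ∑ x, ∑ y, Complex.normSq (choiMatrix Φ x y) =
      ∑ i, ∑ i', ∑ p : γ × γ, Complex.normSq (choiMatrix Φ (i, p.1) (i', p.2)) := by
    simp only [Fintype.sum_prod_type]
    exact sum_congr rfl fun i _ => sum_comm
  rw [hrhs, sum_comm, mul_sum]
  refine sum_congr rfl fun i _ => ?_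
  rw [sum_comm, mul_sum]
  refine sum_congr rfl fun i' _ => ?_
  simp_rw [hΦ]
  exact sum_normSq_sum_mul_of_orthogonal (fun s (p : γ × γ) => P s p.1 p.2) C hP
    (fun p => choiMatrix Φ (i, p.1) (i', p.2))

lemma sum_traceNorm_sq_apply_le_of_orthogonal {σ α γ : Type*} [Fintype σ] [Fintype α]
    [DecidableEq α] [Fintype γ] [DecidableEq γ] (P : σ → Matrix γ γ ℂ) {C : ℝ} (hC : 0 ≤ C)
    (hP : ∀ p q : γ × γ, ∑ s, P s p.1 p.2 * conj (P s q.1 q.2) = if p = q then (C : ℂ) else 0)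
    (Φ : Matrix γ γ ℂ →ₗ[ℂ] Matrix α α ℂ) (hΦ : (choiMatrix Φ).PosSemidef) :
    ∑ s, traceNorm (Φ (P s)) ^ 2 ≤ Fintype.card α * C * (choiMatrix Φ).trace.re ^ 2 := by
  calc ∑ s, traceNorm (Φ (P s)) ^ 2
      ≤ ∑ s, Fintype.card α * ∑ i, ∑ i', Complex.normSq (Φ (P s) i i') :=
        sum_le_sum fun s _ => traceNorm_sq_le_card_mul_sum_normSq _
    _ = Fintype.card α * C * ∑ x, ∑ y, Complex.normSq (choiMatrix Φ x y) := by
        rw [← mul_sum, sum_normSq_apply_of_orthogonal P C hP, mul_assoc]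
    _ ≤ Fintype.card α * C * (choiMatrix Φ).trace.re ^ 2 := by
        gcongr
        exact hΦ.sum_normSq_le_re_trace_sq

lemma pauli_orthogonal (a b c d : Fin 2) :
    ∑ u, pauli u a b * conj (pauli u c d) = if (a, b) = (c, d) then 2 else 0 := by
  fin_cases a <;> fin_cases b <;> fin_cases c <;> fin_cases d <;>
    simp [pauli, Fin.sum_univ_four, one_apply, Complex.ext_iff] <;> norm_num

lemma pauliString_orthogonal (n : ℕ) (p q : (Fin n → Fin 2) × (Fin n → Fin 2)) :
    ∑ s, pauliString n s p.1 p.2 * conj (pauliString n s q.1 q.2) =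
      if p = q then ((2 ^ n : ℝ) : ℂ) else 0 := by
  simp only [pauliString, of_apply, map_prod, ← prod_mul_distrib]
  rw [← Fintype.prod_sum fun t u => pauli u (p.1 t) (p.2 t) * conj (pauli u (q.1 t) (q.2 t))]
  simp_rw [pauli_orthogonal, prod_ite_zero, prod_const, card_univ, Fintype.card_fin]
  push_cast
  congr 1
  simp [Prod.ext_iff, funext_iff, forall_and]

lemma pauliString_smul_orthogonal (n : ℕ) (c : ℂ) (p q : (Fin n → Fin 2) × (Fin n → Fin 2)) :
    ∑ s, (c • pauliString n s) p.1 p.2 * conj ((c • pauliString n s) q.1 q.2) =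
      if p = q then ((Complex.normSq c * 2 ^ n : ℝ) : ℂ) else 0 := by
  simp_rw [Matrix.smul_apply, smul_eq_mul, map_mul,
    show ∀ x y : ℂ, c * x * (conj c * y) = c * conj c * (x * y) from fun x y => by ring,
    ← mul_sum, pauliString_orthogonal, Complex.mul_conj, mul_ite, mul_zero]
  push_cast
  rfl

lemma trace_ptr {α β : Type*} [Fintype α] [Fintype β] (B : Matrix (α × β) (α × β) ℂ) :
    (ptr B).trace = B.trace := by
  simp [ptr, trace, Fintype.sum_prod_type]

section PtrConjKronecker

variable {α β γ δ : Type*} [Fintype β] [Fintype γ] [Fintype δ]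

noncomputable def ptrConjKronecker (M : Matrix (α × β) (δ × γ) ℂ) (Sig : Matrix δ δ ℂ) :
    Matrix γ γ ℂ →ₗ[ℂ] Matrix α α ℂ where
  toFun Q := ptr (M * (Sig ⊗ₖ Q) * Mᴴ)
  map_add' Q Q' := by
    ext i i'
    simp only [kronecker_add, Matrix.mul_add, Matrix.add_mul, ptr, of_apply, Matrix.add_apply,
      sum_add_distrib]
  map_smul' c Q := by
    ext i i'
    simp only [kronecker_smul, Matrix.mul_smul, Matrix.smul_mul, ptr, of_apply, Matrix.smul_apply,
      smul_eq_mul, mul_sum, RingHom.id_apply]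

lemma ptrConjKronecker_apply (M : Matrix (α × β) (δ × γ) ℂ) (Sig : Matrix δ δ ℂ)
    (Q : Matrix γ γ ℂ) : ptrConjKronecker M Sig Q = ptr (M * (Sig ⊗ₖ Q) * Mᴴ) :=
  rfl

lemma choiMatrix_ptrConjKronecker [DecidableEq γ] (M : Matrix (α × β) (δ × γ) ℂ)
    (Sig : Matrix δ δ ℂ) :
    choiMatrix (ptrConjKronecker M Sig) =
      ∑ b, of (fun x j => M (x.1, b) (j, x.2)) * Sig * (of fun x j => M (x.1, b) (j, x.2))ᴴ := by
  ext ⟨i, a⟩ ⟨i', a'⟩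
  simp [choiMatrix, ptrConjKronecker_apply, ptr, mul_apply, Matrix.sum_apply, single_apply,
    Fintype.sum_prod_type, ite_and]

lemma posSemidef_choiMatrix_ptrConjKronecker [Fintype α] [DecidableEq γ]
    (M : Matrix (α × β) (δ × γ) ℂ) {Sig : Matrix δ δ ℂ} (hSig : Sig.PosSemidef) :
    (choiMatrix (ptrConjKronecker M Sig)).PosSemidef := by
  rw [choiMatrix_ptrConjKronecker]
  exact posSemidef_sum _ fun b _ => hSig.mul_mul_conjTranspose_same _

lemma trace_choiMatrix_ptrConjKronecker [Fintype α] [DecidableEq γ]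
    (M : Matrix (α × β) (δ × γ) ℂ) (Sig : Matrix δ δ ℂ) :
    (choiMatrix (ptrConjKronecker M Sig)).trace = (Mᴴ * M * (Sig ⊗ₖ 1)).trace := by
  rw [trace_choiMatrix, ptrConjKronecker_apply, trace_ptr, trace_mul_cycle]

end PtrConjKronecker

theorem bounded_memory_average_discrepancy_bound_general
    (n k m : ℕ)
    (Sig : Matrix (Fin (2 ^ k)) (Fin (2 ^ k)) ℂ) (hSig : Sig.PosSemidef)
    (M : Matrix (Fin (2 ^ k) × Fin (2 ^ m)) (Fin (2 ^ k) × (Fin n → Fin 2)) ℂ) :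
    (1 / (4 ^ n - 1) : ℝ) *
        ∑ s ∈ Finset.univ.filter (fun s : Fin n → Fin 4 => s ≠ 0),
          (traceNorm (ptr (M * (Sig ⊗ₖ (((2 : ℂ) ^ n)⁻¹ • pauliString n s)) * Mᴴ))) ^ 2
      ≤ ((2 : ℝ) ^ k / (2 : ℝ) ^ n / ((4 : ℝ) ^ n - 1)) *
          ((Mᴴ * M *
            (Sig ⊗ₖ (1 : Matrix (Fin n → Fin 2) (Fin n → Fin 2) ℂ))).trace.re) ^ 2 := by
  have hbound := sum_traceNorm_sq_apply_le_of_orthogonal _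
    (mul_nonneg (Complex.normSq_nonneg _) (by positivity))
    (pauliString_smul_orthogonal n ((2 : ℂ) ^ n)⁻¹) (ptrConjKronecker M Sig)
    (posSemidef_choiMatrix_ptrConjKronecker M hSig)
  have hc : Complex.normSq ((2 : ℂ) ^ n)⁻¹ * 2 ^ n = ((2 : ℝ) ^ n)⁻¹ := by
    rw [map_inv₀, map_pow, Complex.normSq_ofNat, mul_pow]
    field_simp
  simp only [ptrConjKronecker_apply, trace_choiMatrix_ptrConjKronecker, Fintype.card_fin, hc]
    at hbound
  have h4 : (0 : ℝ) ≤ 1 / (4 ^ n - 1) :=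
    one_div_nonneg.mpr (sub_nonneg.mpr (one_le_pow₀ (by norm_num)))
  grw [sum_le_sum_of_subset_of_nonneg (filter_subset _ _) fun s _ _ => sq_nonneg _, hbound]
  exact le_of_eq (by push_cast; ring)

/-- Average discrepancy bound for an edge of a learning tree with
`k` qubits of quantum memory (Lemma 6.2): averaging over non-identity `n`-qubit
Pauli strings,
`(1/(4ⁿ−1)) ∑_{s ≠ 0} ‖Tr_{>k}(M (Σ ⊗ P_s/2ⁿ) Mᴴ)‖_tr²
    ≤ (2^{k−n}/(4ⁿ−1)) · [Tr(Mᴴ M (Σ ⊗ I))]²`. -/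
theorem bounded_memory_average_discrepancy_bound
    (n k m : ℕ) (hn : 1 ≤ n)
    (Sig : Matrix (Fin (2 ^ k)) (Fin (2 ^ k)) ℂ) (hSig : Sig.PosSemidef)
    (M : Matrix (Fin (2 ^ k) × Fin (2 ^ m)) (Fin (2 ^ k) × (Fin n → Fin 2)) ℂ) :
    (1 / (4 ^ n - 1) : ℝ) *
        ∑ s ∈ Finset.univ.filter (fun s : Fin n → Fin 4 => s ≠ 0),
          (traceNorm (ptr (M * (Sig ⊗ₖ (((2 : ℂ) ^ n)⁻¹ • pauliString n s)) * Mᴴ))) ^ 2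
      ≤ ((2 : ℝ) ^ k / (2 : ℝ) ^ n / ((4 : ℝ) ^ n - 1)) *
          ((Mᴴ * M *
            (Sig ⊗ₖ (1 : Matrix (Fin n → Fin 2) (Fin n → Fin 2) ℂ))).trace.re) ^ 2 :=
  bounded_memory_average_discrepancy_bound_general n k m Sig hSig M
end
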